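/- arXiv:2410.23542 — 3 statements merged into one kernel-verified Lean document; each statement's English description precedes it below -/
import Mathlib

section
/- Fix δ ∈ [0,1) and for each natural number n ≥ 1 set m_n = ⌈n/(2−δ)⌉ and a_n = (1/n)·[ (n − m_n − 1) − (1/(1−δ))·∑_{i=m_n}^{n−1} ln(i/m_n) ]. Then liminf_{n→∞} a_n ≥ 1 − ln(2−δ)/(1−δ). (This is the analytic core of the proof that NR(q) with q = 1/(2−δ) is asymptotically (1 − ln(2−δ)/(1−δ))-competitive.) -/
/-!
With `m = ⌈n/(2-δ)⌉` and `c = 1/(1-δ)`, the sum `∑_{i=m}^{n-1} ln(i/m)` of an increasing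
function is at most `∫_m^n ln(x/m) dx = n ln(n/m) - n + m`, and `n/m ≤ 2-δ`. Since
`(2-δ)c = 1+c` and `m ≤ n/(2-δ) + 1`, this gives `a_n ≥ 1 - c ln(2-δ) - (2+c)/n`, whose limit
is the claimed bound.
-/

open Filter Finset Real

theorem le_liminf_of_eventually_sub_div_le {u : ℕ → ℝ} {T C B : ℝ}
    (hlow : ∀ᶠ n in atTop, T - C / n ≤ u n) (hup : ∀ n, u n ≤ B) :
    T ≤ liminf u atTop := by
  have htend : Tendsto (fun n : ℕ => T - C / n) atTop (nhds T) := by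
    simpa using tendsto_const_nhds.sub (tendsto_const_div_atTop_nhds_zero_nat C)
  calc T = liminf (fun n : ℕ => T - C / n) atTop := htend.liminf_eq.symm
    _ ≤ liminf u atTop :=
      liminf_le_liminf hlow htend.isBoundedUnder_ge (isCoboundedUnder_ge_of_le atTop hup)

theorem integral_log_div {m : ℝ} (hm : m ≠ 0) (b : ℝ) :
    ∫ x in m..b, log (x / m) = b * log (b / m) - b + m := by
  rw [intervalIntegral.integral_comp_div log hm, integral_log, div_self hm, smul_eq_mul]
  field_simp
  simp only [log_one]
  ring

theorem sum_Ico_log_div_le (m n : ℕ) (hm : 0 < m) (hmn : m ≤ n) :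
    ∑ i ∈ Ico m n, log ((i : ℝ) / m) ≤ n * log ((n : ℝ) / m) - n + m := by
  have hm₀ : (0 : ℝ) < m := Nat.cast_pos.mpr hm
  have hmono : MonotoneOn (fun x : ℝ => log (x / m)) (Set.Icc (m : ℝ) n) :=
    fun x hx _ _ hxy => log_le_log (div_pos (hm₀.trans_le hx.1) hm₀) (by gcongr)
  rw [← integral_log_div hm₀.ne']
  exact hmono.sum_le_integral_Ico hmn

theorem sum_Ico_log_div_nonneg (m n : ℕ) : 0 ≤ ∑ i ∈ Ico m n, log ((i : ℝ) / m) := by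
  refine sum_nonneg fun i hi => ?_
  rcases Nat.eq_zero_or_pos m with rfl | hm
  · simp -- `i / 0 = 0` and `log 0 = 0`
  · exact log_nonneg <| (one_le_div (Nat.cast_pos.mpr hm)).mpr <| by
      exact_mod_cast (mem_Ico.mp hi).1

theorem one_div_mul_sub_sum_Ico_log_div_le_one (m n : ℕ) {c : ℝ} (hc : 0 ≤ c) :
    (1 / (n : ℝ)) * ((n - m - 1) - c * ∑ i ∈ Ico m n, log ((i : ℝ) / m)) ≤ 1 := by
  rcases Nat.eq_zero_or_pos n with rfl | hn
  · simp
  have hn₀ : (0 : ℝ) < n := Nat.cast_pos.mpr hn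
  have hsum := mul_nonneg hc (sum_Ico_log_div_nonneg m n)
  calc (1 / (n : ℝ)) * ((n - m - 1) - c * ∑ i ∈ Ico m n, log ((i : ℝ) / m))
      ≤ 1 / n * n := by gcongr; linarith [(Nat.cast_nonneg m : (0 : ℝ) ≤ m)]
    _ = 1 := one_div_mul_cancel hn₀.ne'

section RevenueBound

variable (δ : ℝ)

/-- The length `m_n` of the sampling phase. -/
noncomputable def samplingLength (n : ℕ) : ℕ := ⌈(n : ℝ) / (2 - δ)⌉₊

/-- The lower bound `a_n` on the expected revenue of `NR(1/(2-δ))`, in units of `OPT`. -/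
noncomputable def revenueBound (n : ℕ) : ℝ :=
  (1 / (n : ℝ)) * (((n : ℝ) - samplingLength δ n - 1) - (1 / (1 - δ)) *
    ∑ i ∈ Ico (samplingLength δ n) n, log ((i : ℝ) / samplingLength δ n))

variable {δ}

theorem revenueBound_le_one (h1 : δ < 1) (n : ℕ) : revenueBound δ n ≤ 1 :=
  one_div_mul_sub_sum_Ico_log_div_le_one _ n (one_div_nonneg.mpr (sub_pos.mpr h1).le)

theorem sub_div_le_revenueBound (h1 : δ < 1) {n : ℕ} (hn : 0 < n) :
    1 - log (2 - δ) / (1 - δ) - (2 + 1 / (1 - δ)) / n ≤ revenueBound δ n := by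
  have h2δ : (0 : ℝ) < 2 - δ := by linarith
  have h1δ : (0 : ℝ) < 1 - δ := by linarith
  have hn₀ : (0 : ℝ) < n := Nat.cast_pos.mpr hn
  set m := samplingLength δ n
  set c := 1 / (1 - δ)
  have hm : 0 < m := Nat.ceil_pos.mpr (div_pos hn₀ h2δ)
  have hm₀ : (0 : ℝ) < m := Nat.cast_pos.mpr hm
  have hmn : m ≤ n := Nat.ceil_le.mpr (div_le_self hn₀.le (by linarith))
  have hm_ge : n / (2 - δ) ≤ (m : ℝ) := Nat.le_ceil _
  have hm_le : (m : ℝ) ≤ n / (2 - δ) + 1 := (Nat.ceil_lt_add_one (by positivity)).le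
  have hlog : log ((n : ℝ) / m) ≤ log (2 - δ) :=
    log_le_log (div_pos hn₀ hm₀) ((div_le_iff₀ hm₀).mpr ((div_le_iff₀' h2δ).mp hm_ge))
  have hsum : c * ∑ i ∈ Ico m n, log ((i : ℝ) / m) ≤ c * (n * log (2 - δ) - n + m) := by
    gcongr
    exact (sum_Ico_log_div_le m n hm hmn).trans (by gcongr)
  have hcm : (1 + c) * m ≤ c * n + 1 + c := by
    have : (1 + c) * (n / (2 - δ) + 1) = c * n + 1 + c := by
      simp only [c]; field_simp; ring
    exact this ▸ mul_le_mul_of_nonneg_left hm_le (by positivity)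
  calc 1 - log (2 - δ) / (1 - δ) - (2 + c) / n
      = 1 / n * (n - c * n * log (2 - δ) - (2 + c)) := by simp only [c]; field_simp
    _ ≤ revenueBound δ n := by
      refine mul_le_mul_of_nonneg_left ?_ (by positivity)
      linarith

end RevenueBound

theorem NR_liminf_bound_general (δ : ℝ) (h1 : δ < 1) :
    (1 : ℝ) - Real.log (2 - δ) / (1 - δ) ≤
      Filter.liminf (fun n : ℕ =>
        (1 / (n : ℝ)) *
          (((n : ℝ) - (⌈(n : ℝ) / (2 - δ)⌉₊ : ℝ) - 1)
            - (1 / (1 - δ)) *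
                ∑ i ∈ Finset.Ico (⌈(n : ℝ) / (2 - δ)⌉₊) n,
                  Real.log ((i : ℝ) / (⌈(n : ℝ) / (2 - δ)⌉₊ : ℝ))))
        Filter.atTop :=
  le_liminf_of_eventually_sub_div_le (u := revenueBound δ)
    ((eventually_gt_atTop 0).mono fun _ hn => sub_div_le_revenueBound h1 hn)
    (revenueBound_le_one h1)

/-- Analytic core of the proof that `NR(q)` with `q = 1/(2−δ)` is asymptotically
`(1 − ln(2−δ)/(1−δ))`-competitive.  Fix `δ ∈ [0,1)`, and for each number of requests `n`
let `m_n = ⌈n/(2−δ)⌉` be the length of the sampling phase and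
`a_n = (1/n)·[(n − m_n − 1) − (1/(1−δ))·∑_{i=m_n}^{n−1} ln(i/m_n)]` the per-instance lower
bound on the algorithm's expected revenue relative to `OPT`.  Then
`liminf_{n→∞} a_n ≥ 1 − ln(2−δ)/(1−δ)`. -/
theorem NR_liminf_bound (δ : ℝ) (h0 : 0 ≤ δ) (h1 : δ < 1) :
    (1 : ℝ) - Real.log (2 - δ) / (1 - δ) ≤
      Filter.liminf (fun n : ℕ =>
        (1 / (n : ℝ)) *
          (((n : ℝ) - (⌈(n : ℝ) / (2 - δ)⌉₊ : ℝ) - 1)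
            - (1 / (1 - δ)) *
                ∑ i ∈ Finset.Ico (⌈(n : ℝ) / (2 - δ)⌉₊) n,
                  Real.log ((i : ℝ) / (⌈(n : ℝ) / (2 - δ)⌉₊ : ℝ))))
        Filter.atTop :=
  NR_liminf_bound_general δ h1
end

section
/- With the data and definitions below, the optimal value of the fluid linear program upper-bounds the optimal expected revenue of the exact dynamic program: J(ω, 1) ≤ ¯P, where ¯P is the supremum of ∑_{t∈T} ∑_{i=1}^{N} ∑_{c∈C} P_i·p_t·x_{t,i,c} over all x : T × {1,…,N} × C → ℝ satisfying x ≥ 0, ∑_{c∈C} x_{t,i,c} ≤ λ_t for every (t,i), and ∑_{t∈T} ∑_{i=1}^{N} q_{t,ℓ}·x_{t,i,c} ≤ ω_{c,ℓ} for every (ℓ,c). -/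
/-!
Coach reservation with known arrival rates: the fluid linear program upper-bounds the exact
dynamic program, `J(ω, 1) ≤ ¯P`.
-/

/-- Resource consumption of assigning a request of type `t` to the coach in the given
`Option C` decision: `Δ(t, some c)` consumes `q t ℓ` seats of coach `c` on every leg `ℓ`,
and `Δ(t, none) = 0`. -/
def dpDelta {T C L : Type*} [DecidableEq C] (q : T → L → ℝ) (t : T) :
    Option C → (C × L → ℝ)
  | none => fun _ => 0
  | some c => fun cl => if cl.1 = c then q t cl.2 else 0

/-- A decision `u : T → Option C` is feasible for the residual capacity `κ` if whenever
`u t = some c`, coach `c` has residual capacity at least `q t ℓ` on every leg `ℓ`. -/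
def dpFeasible {T C L : Type*} (q : T → L → ℝ) (κ : C × L → ℝ) (u : T → Option C) : Prop :=
  ∀ t c, u t = some c → ∀ ℓ, q t ℓ ≤ κ (c, ℓ)

/-- The exact dynamic program, indexed so that `dpJ lam p q s N k κ` is the value `J(κ, i)`
at stage `i = N + 1 − k`: `J(κ, N+1) = 0` and, for `1 ≤ i ≤ N`,
`J(κ, i) = max over u feasible for κ of
  ∑ t, λ_t · (p_t·1[u t ≠ none] + s_i · J(κ − Δ(t, u t), i+1))`,
the maximum being taken as the supremum of the (finite, nonempty) set of achievable values. -/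
noncomputable def dpJ {T C L : Type*} [Fintype T] [Fintype L] [DecidableEq C]
    (lam p : T → ℝ) (q : T → L → ℝ) (s : ℕ → ℝ) (N : ℕ) :
    ℕ → (C × L → ℝ) → ℝ
  | 0, _ => 0
  | (k + 1), κ =>
      sSup { v : ℝ | ∃ u : T → Option C, dpFeasible q κ u ∧
        v = ∑ t, lam t * ((if u t = none then 0 else p t) +
              s (N - k) * dpJ lam p q s N k (κ - dpDelta q t (u t))) }

section Aux

lemma sum_comm3 {α β γ M : Type*} [AddCommMonoid M] (A : Finset α) (B : Finset β)
    (G : Finset γ) (f : α → β → γ → M) :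
    ∑ a ∈ A, ∑ b ∈ B, ∑ g ∈ G, f a b g = ∑ g ∈ G, ∑ a ∈ A, ∑ b ∈ B, f a b g := by
  calc ∑ a ∈ A, ∑ b ∈ B, ∑ g ∈ G, f a b g
      = ∑ a ∈ A, ∑ g ∈ G, ∑ b ∈ B, f a b g :=
        Finset.sum_congr rfl fun a _ => Finset.sum_comm
    _ = ∑ g ∈ G, ∑ a ∈ A, ∑ b ∈ B, f a b g := Finset.sum_comm

lemma sum_comm4 {α β γ δ M : Type*} [AddCommMonoid M] (A : Finset α) (B : Finset β)
    (G : Finset γ) (D : Finset δ) (f : α → β → γ → δ → M) :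
    ∑ a ∈ A, ∑ b ∈ B, ∑ g ∈ G, ∑ d ∈ D, f a b g d
      = ∑ d ∈ D, ∑ a ∈ A, ∑ b ∈ B, ∑ g ∈ G, f a b g d := by
  calc ∑ a ∈ A, ∑ b ∈ B, ∑ g ∈ G, ∑ d ∈ D, f a b g d
      = ∑ a ∈ A, ∑ d ∈ D, ∑ b ∈ B, ∑ g ∈ G, f a b g d :=
        Finset.sum_congr rfl fun a _ => sum_comm3 B G D (f a)
    _ = ∑ d ∈ D, ∑ a ∈ A, ∑ b ∈ B, ∑ g ∈ G, f a b g d := Finset.sum_comm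

variable {T C L : Type*} [Fintype T] [Fintype C] [DecidableEq C] [Fintype L]

/-- Feasible-value set of the fluid LP with stages `Icc i N` and capacity `κ`. -/
def Fset (lam p : T → ℝ) (q : T → L → ℝ) (P : ℕ → ℝ) (N i : ℕ) (κ : C × L → ℝ) : Set ℝ :=
  { v | ∃ x : T → ℕ → C → ℝ,
      (∀ t j c, 0 ≤ x t j c) ∧
      (∀ t, ∀ j ∈ Finset.Icc i N, ∑ c, x t j c ≤ lam t) ∧
      (∀ ℓ c, ∑ t, ∑ j ∈ Finset.Icc i N, q t ℓ * x t j c ≤ κ (c, ℓ)) ∧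
      v = ∑ t, ∑ j ∈ Finset.Icc i N, ∑ c, P j * p t * x t j c }

variable {lam p : T → ℝ} {q : T → L → ℝ} {P : ℕ → ℝ} {N : ℕ}

lemma zero_mem_Fset (hlam : ∀ t, 0 ≤ lam t) {i : ℕ} {κ : C × L → ℝ}
    (hκ : ∀ cl, 0 ≤ κ cl) : (0 : ℝ) ∈ Fset lam p q P N i κ := by
  refine ⟨fun _ _ _ => 0, fun _ _ _ => le_refl _, ?_, ?_, by simp⟩
  · intro t j _; simpa using hlam t
  · intro ℓ c; simpa using hκ (c, ℓ)

lemma bddAbove_Fset (hlam : ∀ t, 0 ≤ lam t) (hp : ∀ t, 0 ≤ p t) (i : ℕ) (κ : C × L → ℝ) :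
    BddAbove (Fset lam p q P N i κ) := by
  refine ⟨∑ t, ∑ j ∈ Finset.Icc i N, ∑ _c : C, |P j| * p t * lam t, ?_⟩
  rintro v ⟨x, hx0, hxc, -, rfl⟩
  refine Finset.sum_le_sum fun t _ => Finset.sum_le_sum fun j hj =>
    Finset.sum_le_sum fun c _ => ?_
  have hxle : x t j c ≤ lam t :=
    le_trans (Finset.single_le_sum (fun c _ => hx0 t j c) (Finset.mem_univ c)) (hxc t j hj)
  calc P j * p t * x t j c ≤ |P j| * p t * x t j c :=
        mul_le_mul_of_nonneg_right (mul_le_mul_of_nonneg_right (le_abs_self _) (hp t))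
          (hx0 t j c)
    _ ≤ |P j| * p t * lam t :=
        mul_le_mul_of_nonneg_left hxle (mul_nonneg (abs_nonneg _) (hp t))

lemma conv_Fset (hlam : ∀ t, 0 ≤ lam t) (hlamsum : ∑ t, lam t = 1)
    (hp : ∀ t, 0 ≤ p t) (i : ℕ)
    (κf : T → C × L → ℝ) (hκf : ∀ t cl, 0 ≤ κf t cl) :
    ∑ t, lam t * sSup (Fset lam p q P N i (κf t)) ≤
      sSup (Fset lam p q P N i (fun cl => ∑ t, lam t * κf t cl)) := by
  refine le_of_forall_pos_le_add fun ε hε => ?_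
  have hch : ∀ t : T, ∃ v ∈ Fset lam p q P N i (κf t),
      sSup (Fset lam p q P N i (κf t)) - ε < v := fun t =>
    exists_lt_of_lt_csSup ⟨0, zero_mem_Fset hlam (hκf t)⟩ (by linarith)
  choose v hvmem hvlt using hch
  choose x hx0 hxc hxr hval using hvmem
  have hymem : (∑ t, lam t * v t) ∈
      Fset lam p q P N i (fun cl => ∑ t, lam t * κf t cl) := by
    refine ⟨fun t' j c => ∑ t, lam t * x t t' j c, ?_, ?_, ?_, ?_⟩
    · intro t' j c
      exact Finset.sum_nonneg fun t _ => mul_nonneg (hlam t) (hx0 t t' j c)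
    · intro t' j hj
      calc ∑ c, ∑ t, lam t * x t t' j c = ∑ t, lam t * ∑ c, x t t' j c := by
            rw [Finset.sum_comm]; simp only [← Finset.mul_sum]
        _ ≤ ∑ t, lam t * lam t' :=
            Finset.sum_le_sum fun t _ =>
              mul_le_mul_of_nonneg_left (hxc t t' j hj) (hlam t)
        _ = lam t' := by rw [← Finset.sum_mul, hlamsum, one_mul]
    · intro ℓ c
      calc ∑ t', ∑ j ∈ Finset.Icc i N, q t' ℓ * ∑ t, lam t * x t t' j c
          = ∑ t', ∑ j ∈ Finset.Icc i N, ∑ t, lam t * (q t' ℓ * x t t' j c) := by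
            refine Finset.sum_congr rfl fun t' _ => Finset.sum_congr rfl fun j _ => ?_
            rw [Finset.mul_sum]
            exact Finset.sum_congr rfl fun t _ => by ring
        _ = ∑ t, ∑ t', ∑ j ∈ Finset.Icc i N, lam t * (q t' ℓ * x t t' j c) :=
            sum_comm3 _ _ _ _
        _ = ∑ t, lam t * ∑ t', ∑ j ∈ Finset.Icc i N, q t' ℓ * x t t' j c := by
            simp only [← Finset.mul_sum]
        _ ≤ ∑ t, lam t * κf t (c, ℓ) :=
            Finset.sum_le_sum fun t _ =>
              mul_le_mul_of_nonneg_left (hxr t ℓ c) (hlam t)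
    · calc ∑ t, lam t * v t
          = ∑ t, lam t * ∑ t', ∑ j ∈ Finset.Icc i N, ∑ c, P j * p t' * x t t' j c := by
            exact Finset.sum_congr rfl fun t _ => by rw [hval t]
        _ = ∑ t, ∑ t', ∑ j ∈ Finset.Icc i N, ∑ c, lam t * (P j * p t' * x t t' j c) := by
            simp only [Finset.mul_sum]
        _ = ∑ t', ∑ j ∈ Finset.Icc i N, ∑ c, ∑ t, lam t * (P j * p t' * x t t' j c) :=
            (sum_comm4 _ _ _ _ _).symm
        _ = ∑ t', ∑ j ∈ Finset.Icc i N, ∑ c, P j * p t' * ∑ t, lam t * x t t' j c := by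
            refine Finset.sum_congr rfl fun t' _ => Finset.sum_congr rfl fun j _ =>
              Finset.sum_congr rfl fun c _ => ?_
            rw [Finset.mul_sum]
            exact Finset.sum_congr rfl fun t _ => by ring
  have h1 : ∑ t, lam t * (sSup (Fset lam p q P N i (κf t)) - ε) ≤ ∑ t, lam t * v t :=
    Finset.sum_le_sum fun t _ => mul_le_mul_of_nonneg_left (hvlt t).le (hlam t)
  have h2 : ∑ t, lam t * (sSup (Fset lam p q P N i (κf t)) - ε)
      = ∑ t, lam t * sSup (Fset lam p q P N i (κf t)) - ε := by
    simp only [mul_sub, Finset.sum_sub_distrib, ← Finset.sum_mul, hlamsum, one_mul]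
  have h3 := le_csSup (bddAbove_Fset hlam hp i _) hymem
  linarith

lemma step_Fset (hlam : ∀ t, 0 ≤ lam t)
    (hp : ∀ t, 0 ≤ p t) {i : ℕ} (hiN : i ≤ N)
    (u : T → Option C) (κ' κ : C × L → ℝ)
    (hκ'0 : ∀ cl, 0 ≤ κ' cl)
    (hκκ : ∀ cl, κ' cl + ∑ t, lam t * dpDelta q t (u t) cl ≤ κ cl) :
    P i * (∑ t, lam t * (if u t = none then 0 else p t)) + sSup (Fset lam p q P N (i+1) κ')
      ≤ sSup (Fset lam p q P N i κ) := by
  have hIcc : Finset.Icc i N = insert i (Finset.Icc (i+1) N) := by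
    ext j; simp only [Finset.mem_Icc, Finset.mem_insert]; omega
  have hnot : i ∉ Finset.Icc (i+1) N := by simp
  have key : ∀ w ∈ Fset lam p q P N (i+1) κ',
      P i * (∑ t, lam t * (if u t = none then 0 else p t)) + w ∈ Fset lam p q P N i κ := by
    rintro w ⟨x', hx0, hxc, hxr, rfl⟩
    refine ⟨fun t j c => if j = i then lam t * (if u t = some c then 1 else 0) else x' t j c,
      ?_, ?_, ?_, ?_⟩
    · intro t j c
      dsimp only
      split
      · exact mul_nonneg (hlam t) (by split <;> norm_num)
      · exact hx0 t j c
    · intro t j hj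
      dsimp only
      by_cases hji : j = i
      · subst hji
        simp only [eq_self_iff_true, if_true]
        rw [← Finset.mul_sum]
        cases hu : u t with
        | none => simp [hlam t]
        | some c0 => simp
      · simp only [if_neg hji]
        refine hxc t j ?_
        simp only [Finset.mem_Icc] at hj ⊢
        omega
    · intro ℓ c
      dsimp only
      have hper : ∀ t : T, (∑ j ∈ Finset.Icc i N, q t ℓ *
            (if j = i then lam t * (if u t = some c then 1 else 0) else x' t j c))
          = lam t * dpDelta q t (u t) (c, ℓ)
            + ∑ j ∈ Finset.Icc (i+1) N, q t ℓ * x' t j c := by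
        intro t
        rw [hIcc, Finset.sum_insert hnot]
        congr 1
        · simp only [if_pos rfl]
          cases hu : u t with
          | none => simp [dpDelta]
          | some c0 =>
            by_cases hc : c = c0
            · subst hc; simp [dpDelta]; ring
            · rw [if_neg (show ¬(some c0 = some c) from fun h => hc (Option.some.inj h).symm)]
              simp [dpDelta, hc]
        · refine Finset.sum_congr rfl fun j hj => ?_
          rw [if_neg (by simp only [Finset.mem_Icc] at hj; omega)]
      rw [Finset.sum_congr rfl fun t _ => hper t, Finset.sum_add_distrib]
      have := hxr ℓ c
      have := hκκ (c, ℓ)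
      linarith
    · dsimp only
      have hper : ∀ t : T, (∑ j ∈ Finset.Icc i N, ∑ c, P j * p t *
            (if j = i then lam t * (if u t = some c then 1 else 0) else x' t j c))
          = P i * (lam t * (if u t = none then 0 else p t))
            + ∑ j ∈ Finset.Icc (i+1) N, ∑ c, P j * p t * x' t j c := by
        intro t
        rw [hIcc, Finset.sum_insert hnot]
        congr 1
        · simp only [if_pos rfl]
          cases hu : u t with
          | none => simp [hu]
          | some c0 =>
            simp only [hu, Option.some.injEq, reduceCtorEq, if_false]
            rw [Finset.sum_eq_single c0]
            · simp; ring
            · intro c _ hc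
              simp [Ne.symm hc]
            · intro h; exact absurd (Finset.mem_univ c0) h
        · refine Finset.sum_congr rfl fun j hj => Finset.sum_congr rfl fun c _ => ?_
          rw [if_neg (by simp only [Finset.mem_Icc] at hj; omega)]
      rw [Finset.sum_congr rfl fun t _ => hper t, Finset.sum_add_distrib, ← Finset.mul_sum]
  have hne : (Fset lam p q P N (i+1) κ' : Set ℝ).Nonempty := ⟨0, zero_mem_Fset hlam hκ'0⟩
  have h2 : sSup (Fset lam p q P N (i+1) κ')
      ≤ sSup (Fset lam p q P N i κ)
        - P i * (∑ t, lam t * (if u t = none then 0 else p t)) := by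
    refine csSup_le hne fun w hw => ?_
    have := le_csSup (bddAbove_Fset hlam hp i κ) (key w hw)
    linarith
  linarith

lemma dp_le_Fset (hlam : ∀ t, 0 ≤ lam t) (hlamsum : ∑ t, lam t = 1)
    (hp : ∀ t, 0 ≤ p t) (hq : ∀ t ℓ, 0 ≤ q t ℓ)
    {s : ℕ → ℝ}
    (hPpos : ∀ i, 1 ≤ i → i ≤ N → 0 < P i)
    (hs : ∀ i, 1 ≤ i → i < N → s i = P (i + 1) / P i)
    (k : ℕ) :
    k ≤ N → ∀ κ : C × L → ℝ, (∀ cl, 0 ≤ κ cl) →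
      P (N + 1 - k) * dpJ lam p q s N k κ ≤ sSup (Fset lam p q P N (N + 1 - k) κ) := by
  induction k with
  | zero =>
    intro _ κ hκ
    show P (N + 1 - 0) * dpJ lam p q s N 0 κ ≤ _
    rw [show dpJ lam p q s N 0 κ = 0 from rfl, mul_zero]
    exact le_csSup (bddAbove_Fset hlam hp _ _) (zero_mem_Fset hlam hκ)
  | succ k ih =>
    intro hk κ hκ
    have hkN : k ≤ N := by omega
    have hidx : N + 1 - (k + 1) = N - k := by omega
    have hidx2 : N + 1 - k = (N - k) + 1 := by omega
    set i := N - k with hi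
    have hi1 : 1 ≤ i := by omega
    have hiN : i ≤ N := by omega
    have hPi : 0 < P i := hPpos i hi1 hiN
    rw [hidx]
    rw [dpJ]
    set S := { v : ℝ | ∃ u : T → Option C, dpFeasible q κ u ∧
        v = ∑ t, lam t * ((if u t = none then 0 else p t) +
              s (N - k) * dpJ lam p q s N k (κ - dpDelta q t (u t))) } with hS
    have hSne : S.Nonempty := by
      refine ⟨_, fun _ => none, fun t c h => by exact absurd h (by simp), rfl⟩
    have key : ∀ v ∈ S, P i * v ≤ sSup (Fset lam p q P N i κ) := by
      rintro v ⟨u, hu, rfl⟩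
      set κt : T → C × L → ℝ := fun t => κ - dpDelta q t (u t) with hκt
      have hκt0 : ∀ t cl, 0 ≤ κt t cl := by
        intro t cl
        obtain ⟨c', ℓ⟩ := cl
        simp only [hκt, Pi.sub_apply]
        cases hu' : u t with
        | none => simp [dpDelta, hκ (c', ℓ)]
        | some c =>
          simp only [dpDelta]
          by_cases hc : c' = c
          · subst hc
            simp only [eq_self_iff_true, if_true]
            have := hu t c' hu' ℓ
            linarith
          · simp [hc, hκ (c', ℓ)]
      have expand : P i * (∑ t, lam t * ((if u t = none then 0 else p t) +
              s (N - k) * dpJ lam p q s N k (κt t)))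
          = P i * (∑ t, lam t * (if u t = none then 0 else p t))
            + ∑ t, lam t * (P i * (s i * dpJ lam p q s N k (κt t))) := by
        simp only [Finset.mul_sum, ← Finset.sum_add_distrib, ← hi]
        exact Finset.sum_congr rfl fun t _ => by ring
      have claim : ∀ t, lam t * (P i * (s i * dpJ lam p q s N k (κt t)))
          ≤ lam t * sSup (Fset lam p q P N (i+1) (κt t)) := by
        intro t
        rcases Nat.eq_zero_or_pos k with hk0 | hkpos
        · subst hk0
          rw [show dpJ lam p q s N 0 (κt t) = 0 from rfl]
          rw [mul_zero, mul_zero, mul_zero]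
          exact mul_nonneg (hlam t)
            (le_csSup (bddAbove_Fset hlam hp _ _) (zero_mem_Fset hlam (hκt0 t)))
        · have hiltN : i < N := by omega
          have hsi : P i * s i = P (i + 1) := by
            rw [hs i hi1 hiltN]
            field_simp
          have hIH := ih hkN (κt t) (hκt0 t)
          rw [hidx2] at hIH
          calc lam t * (P i * (s i * dpJ lam p q s N k (κt t)))
              = lam t * (P (i+1) * dpJ lam p q s N k (κt t)) := by rw [← hsi]; ring
            _ ≤ lam t * sSup (Fset lam p q P N (i+1) (κt t)) :=
                mul_le_mul_of_nonneg_left hIH (hlam t)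
      have hconv := conv_Fset (q := q) (P := P) (N := N) hlam hlamsum hp (i+1) κt hκt0
      have hκ'0 : ∀ cl, 0 ≤ ∑ t, lam t * κt t cl := fun cl =>
        Finset.sum_nonneg fun t _ => mul_nonneg (hlam t) (hκt0 t cl)
      have hκκ : ∀ cl, (∑ t, lam t * κt t cl) + ∑ t, lam t * dpDelta q t (u t) cl ≤ κ cl := by
        intro cl
        have : (∑ t, lam t * κt t cl) + ∑ t, lam t * dpDelta q t (u t) cl
            = ∑ t, lam t * κ cl := by
          rw [← Finset.sum_add_distrib]
          refine Finset.sum_congr rfl fun t _ => ?_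
          simp only [hκt, Pi.sub_apply]
          ring
        rw [this, ← Finset.sum_mul, hlamsum, one_mul]
      have hstep := step_Fset (P := P) hlam hp hiN u _ κ hκ'0 hκκ
      have hsum := Finset.sum_le_sum fun t (_ : t ∈ Finset.univ) => claim t
      rw [expand]
      linarith
    have hdiv : sSup S ≤ sSup (Fset lam p q P N i κ) / P i := by
      refine csSup_le hSne fun v hv => ?_
      rw [le_div_iff₀ hPi, mul_comm]
      exact key v hv
    calc P i * sSup S ≤ P i * (sSup (Fset lam p q P N i κ) / P i) :=
        mul_le_mul_of_nonneg_left hdiv hPi.le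
      _ = sSup (Fset lam p q P N i κ) := by field_simp

end Aux

/-- With arrival probabilities `λ_t ≥ 0` summing to `1`, fares `p_t ≥ 0`, resource
consumptions `q_{t,ℓ} ≥ 0`, initial capacities `ω_{c,ℓ} ≥ 0`, horizon `N ≥ 1`, tail arrival
probabilities `1 = P_1 ≥ P_2 ≥ … ≥ P_N > 0` and survival probabilities `s_i = P_{i+1}/P_i`,
the optimal expected revenue `J(ω, 1)` of the exact dynamic program is at most the optimal
value `¯P` of the fluid linear program, which maximizes
`∑_{t,i,c} P_i·p_t·x_{t,i,c}` over all `x ≥ 0` with `∑_c x_{t,i,c} ≤ λ_t` for every `(t,i)`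
and `∑_t ∑_i q_{t,ℓ}·x_{t,i,c} ≤ ω_{c,ℓ}` for every `(ℓ,c)`. -/
theorem dp_le_fluid {T C L : Type*}
    [Fintype T] [Nonempty T] [Fintype C] [Nonempty C] [DecidableEq C]
    [Fintype L] [Nonempty L]
    (lam p : T → ℝ) (hlam : ∀ t, 0 ≤ lam t) (hlamsum : ∑ t, lam t = 1)
    (hp : ∀ t, 0 ≤ p t)
    (q : T → L → ℝ) (hq : ∀ t ℓ, 0 ≤ q t ℓ)
    (ω : C × L → ℝ) (hω : ∀ cl, 0 ≤ ω cl)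
    (N : ℕ) (hN : 1 ≤ N)
    (P : ℕ → ℝ) (hP1 : P 1 = 1)
    (hPmono : ∀ i, 1 ≤ i → i < N → P (i + 1) ≤ P i)
    (hPpos : ∀ i, 1 ≤ i → i ≤ N → 0 < P i)
    (s : ℕ → ℝ) (hs : ∀ i, 1 ≤ i → i < N → s i = P (i + 1) / P i) :
    dpJ lam p q s N N ω ≤
      sSup { v : ℝ | ∃ x : T → ℕ → C → ℝ,
        (∀ t i c, 0 ≤ x t i c) ∧
        (∀ t, ∀ i ∈ Finset.Icc 1 N, ∑ c, x t i c ≤ lam t) ∧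
        (∀ ℓ c, ∑ t, ∑ i ∈ Finset.Icc 1 N, q t ℓ * x t i c ≤ ω (c, ℓ)) ∧
        v = ∑ t, ∑ i ∈ Finset.Icc 1 N, ∑ c, P i * p t * x t i c } := by
  have h := dp_le_Fset (p := p) hlam hlamsum hp hq hPpos hs N le_rfl ω hω
  rw [show N + 1 - N = 1 from by omega, hP1, one_mul] at h
  exact h
end

section
/- Validity of the monotone pre-assignment inequalities for the a-priori assignment problem: with the data below, among all feasible pre-assignments a there exists one maximizing the total weight ∑_{(t,j) : a(t,j) ≠ none} π_{t,j}·p_t and additionally satisfying, for every type t and every j with j+1 < k_t: if a(t, j+1) ≠ none then a(t, j) ≠ none (the (j+1)-st copy of a type is assigned only if the j-th copy is assigned). -/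
/-!
Weights of feasible pre-assignments take finitely many values, so a maximizer exists; among the
maximizers take one minimizing the potential `∑ j` over assigned copies `(t, j)`. If it assigned
copy `j + 1` of `t` but not copy `j`, handing the coach of copy `j + 1` down to copy `j` would
leave every leg load unchanged, change the weight by `(π t j - π t (j + 1)) * p t ≥ 0`, and lower
the potential by one.
-/

open Finset Function

theorem Finset.sum_apply_update_add {ι β M : Type*} [DecidableEq ι] [AddCommMonoid M]
    {s : Finset ι} {i : ι} (hi : i ∈ s) (F : ι → β → M) (g : ι → β) (b : β) :
    ∑ x ∈ s, F x (update g i b x) + F i (g i) = ∑ x ∈ s, F x (g x) + F i b := by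
  simp_rw [apply_update F g i b, sum_update_of_mem hi, ← add_sum_erase s _ hi,
    sdiff_singleton_eq_erase]
  abel

theorem Set.exists_isMaxOn_of_finite_image {α β : Type*} [LinearOrder β] {s : Set α}
    {f : α → β} (hs : s.Nonempty) (hf : (f '' s).Finite) : ∃ a ∈ s, IsMaxOn f s a := by
  obtain ⟨a, ha, hmax⟩ := Set.Finite.exists_maximalFor' f s hf hs
  exact ⟨a, ha, fun b hb => (le_total (f b) (f a)).elim id (hmax hb)⟩

/-- A maximizer of minimal potential satisfies `P`. -/
theorem Set.exists_isMaxOn_and_of_improve {α β γ : Type*} [Preorder β] [Preorder γ]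
    [WellFoundedLT γ] {s : Set α} {f : α → β} {a₀ : α} (ha₀ : a₀ ∈ s) (hmax : IsMaxOn f s a₀)
    {P : α → Prop} (Φ : α → γ)
    (himprove : ∀ a ∈ s, IsMaxOn f s a → ¬ P a → ∃ b ∈ s, f a ≤ f b ∧ Φ b < Φ a) :
    ∃ a ∈ s, IsMaxOn f s a ∧ P a := by
  obtain ⟨a, ⟨ha, hamax⟩, hmin⟩ :=
    exists_minimalFor_of_wellFoundedLT (fun a => a ∈ s ∧ IsMaxOn f s a) Φ ⟨a₀, ha₀, hmax⟩
  refine ⟨a, ha, hamax, by_contra fun hP => ?_⟩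
  obtain ⟨b, hb, hab, hΦ⟩ := himprove a ha hamax hP
  exact (hmin ⟨hb, fun x hx => (hamax hx).trans hab⟩ hΦ.le).not_gt hΦ

namespace Preassignment

variable {T C : Type*} [Fintype T] (k : T → ℕ)

def copySum {M : Type*} [AddCommMonoid M] (g : T → ℕ → Option C → M) (a : T → ℕ → Option C) :
    M :=
  ∑ t, ∑ j ∈ range (k t), g t j (a t j)

theorem finite_range_copySum [Finite C] {M : Type*} [AddCommMonoid M]
    (g : T → ℕ → Option C → M) : (Set.range (copySum k g)).Finite := by
  refine (Set.finite_range fun b : (t : T) → Fin (k t) → Option C =>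
    ∑ t, ∑ j : Fin (k t), g t j (b t j)).subset ?_
  rintro _ ⟨a, rfl⟩
  exact ⟨fun t j => a t j, by simp only [copySum, Finset.sum_range]⟩

variable {k}

/-- The `j`-th copy of type `t` takes over the coach of the `(j+1)`-st one, which is released. -/
def moveDown [DecidableEq T] (a : T → ℕ → Option C) (t : T) (j : ℕ) : T → ℕ → Option C :=
  update a t (update (update (a t) j (a t (j + 1))) (j + 1) none)

theorem copySum_moveDown_add [DecidableEq T] {M : Type*} [AddCancelCommMonoid M]
    {g : T → ℕ → Option C → M} {a : T → ℕ → Option C} {t : T} {j : ℕ} (hj : j + 1 < k t)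
    (ha : a t j = none) (hg : ∀ i, g t i none = 0) :
    copySum k g (moveDown a t j) + g t (j + 1) (a t (j + 1)) =
      copySum k g a + g t j (a t (j + 1)) := by
  have hrelease := sum_apply_update_add (s := range (k t)) (mem_range.2 hj) (g t)
    (update (a t) j (a t (j + 1))) none
  have htake := sum_apply_update_add (s := range (k t)) (mem_range.2 (by omega : j < k t))
    (g t) (a t) (a t (j + 1))
  have htype := sum_apply_update_add (mem_univ t) (fun t o => ∑ i ∈ range (k t), g t i (o i)) a
    (update (update (a t) j (a t (j + 1))) (j + 1) none)
  simp only [update_of_ne (by omega : j + 1 ≠ j), hg, add_zero, ha] at hrelease htake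
  unfold copySum moveDown
  apply add_right_cancel (b := ∑ i ∈ range (k t), g t i (a t i))
  rw [add_right_comm, htype, add_assoc, hrelease, htake]
  abel

variable (k)

def assignedSum {M : Type*} [AddCommMonoid M] (f : T → ℕ → M) (a : T → ℕ → Option C) : M :=
  copySum k (fun t j o => if o = none then 0 else f t j) a

def IsFeasible [DecidableEq C] {L : Type*} [DecidableEq L] (n : T → ℕ) (Leg : T → Finset L)
    (ω : ℕ) (a : T → ℕ → Option C) : Prop :=
  ∀ ℓ c, copySum k (fun t _ o => if o = some c ∧ ℓ ∈ Leg t then n t else 0) a ≤ ω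

variable {k} [DecidableEq T] {a : T → ℕ → Option C} {t : T} {j : ℕ}

theorem isFeasible_moveDown [DecidableEq C] {L : Type*} [DecidableEq L] {n : T → ℕ}
    {Leg : T → Finset L} {ω : ℕ} (hj : j + 1 < k t) (ha : a t j = none)
    (hfeas : IsFeasible k n Leg ω a) :
    IsFeasible k n Leg ω (moveDown a t j) := fun ℓ c => by
  have hload := copySum_moveDown_add
    (g := fun t _ o => if o = some c ∧ ℓ ∈ Leg t then n t else 0) hj ha (by simp)
  rw [add_left_inj] at hload
  exact hload ▸ hfeas ℓ c

theorem assignedSum_moveDown_add {M : Type*} [AddCancelCommMonoid M] {f : T → ℕ → M}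
    (hj : j + 1 < k t) (ha : a t j = none) (ha' : a t (j + 1) ≠ none) :
    assignedSum k f (moveDown a t j) + f t (j + 1) = assignedSum k f a + f t j := by
  have h := copySum_moveDown_add (g := fun t j o => if o = none then 0 else f t j)
    hj ha fun _ => if_pos rfl
  simp only [if_neg ha'] at h
  exact h

end Preassignment

open Preassignment in
theorem exists_optimal_monotone_preassignment_general
    {T C L : Type*} [Fintype T] [Fintype C] [DecidableEq C]
    [DecidableEq L]
    (n : T → ℕ) (Leg : T → Finset L) (p : T → ℝ) (hp : ∀ t, 0 ≤ p t)
    (k : T → ℕ) (π : T → ℕ → ℝ)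
    (hπmono : ∀ t j, j + 1 < k t → π t (j + 1) ≤ π t j)
    (ω : ℕ) :
    ∃ a : T → ℕ → Option C,
      -- `a` is feasible
      (∀ ℓ : L, ∀ c : C,
        ∑ t, ∑ j ∈ Finset.range (k t),
          (if a t j = some c ∧ ℓ ∈ Leg t then n t else 0) ≤ ω) ∧
      -- `a` has maximum weight among all feasible pre-assignments
      (∀ a' : T → ℕ → Option C,
        (∀ ℓ : L, ∀ c : C,
          ∑ t, ∑ j ∈ Finset.range (k t),
            (if a' t j = some c ∧ ℓ ∈ Leg t then n t else 0) ≤ ω) →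
        (∑ t, ∑ j ∈ Finset.range (k t), (if a' t j = none then 0 else π t j * p t))
          ≤ ∑ t, ∑ j ∈ Finset.range (k t), (if a t j = none then 0 else π t j * p t)) ∧
      -- the `(j+1)`-st copy of a type is assigned only if the `j`-th copy is assigned
      (∀ t, ∀ j, j + 1 < k t → a t (j + 1) ≠ none → a t j ≠ none) := by
  classical
  let S : Set (T → ℕ → Option C) := {a | IsFeasible k n Leg ω a}
  let W : (T → ℕ → Option C) → ℝ := assignedSum k fun t j => π t j * p t
  let Φ : (T → ℕ → Option C) → ℕ := assignedSum k fun _ j => j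
  have hempty : (fun _ _ => none) ∈ S := fun ℓ c => by simp [copySum]
  have himprove : ∀ a ∈ S, IsMaxOn W S a →
      ¬ (∀ t j, j + 1 < k t → a t (j + 1) ≠ none → a t j ≠ none) →
      ∃ b ∈ S, W a ≤ W b ∧ Φ b < Φ a := by
    rintro a ha - hviolate
    push Not at hviolate
    obtain ⟨t, j, hj, hsucc, hnone⟩ := hviolate
    refine ⟨moveDown a t j, isFeasible_moveDown hj hnone ha, ?_, ?_⟩
    · have hW : W (moveDown a t j) + π t (j + 1) * p t = W a + π t j * p t :=
        assignedSum_moveDown_add hj hnone hsucc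
      linarith [mul_le_mul_of_nonneg_right (hπmono t j hj) (hp t)]
    · have hΦ : Φ (moveDown a t j) + (j + 1) = Φ a + j := assignedSum_moveDown_add hj hnone hsucc
      omega
  obtain ⟨a₀, ha₀, hmax⟩ := Set.exists_isMaxOn_of_finite_image ⟨_, hempty⟩
    ((finite_range_copySum k _).subset (Set.image_subset_range W S))
  obtain ⟨a, ha, hamax, hmono⟩ := Set.exists_isMaxOn_and_of_improve ha₀ hmax Φ himprove
  exact ⟨a, ha, fun a' ha' => hamax ha', hmono⟩

/-- Validity of the monotone pre-assignment inequalities for the a-priori assignment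
problem.  Request types `T` (finite, nonempty) have group sizes `n_t`, itineraries
`Leg t ⊆ L`, fares `p_t ≥ 0`, and `k_t` potential copies; the `j`-th copy (`j < k_t`) of
type `t` arrives with probability `π_{t,j} ∈ [0,1]`, nonincreasing in `j`.  Coaches `C`
(finite, nonempty) have seating capacity `ω` on every leg.  A pre-assignment
`a : (t,j) ↦ Option C` is feasible if on every leg `ℓ` and coach `c` the total group size of
assigned copies whose itinerary contains `ℓ` is at most `ω`; its weight is
`∑ π_{t,j}·p_t` over assigned pairs.  Then among all feasible pre-assignments there exists
one of maximum weight that moreover assigns the `(j+1)`-st copy of a type only if the `j`-th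
copy is assigned. -/
theorem exists_optimal_monotone_preassignment
    {T C L : Type*} [Fintype T] [Nonempty T] [Fintype C] [Nonempty C] [DecidableEq C]
    [Fintype L] [DecidableEq L]
    (n : T → ℕ) (Leg : T → Finset L) (p : T → ℝ) (hp : ∀ t, 0 ≤ p t)
    (k : T → ℕ) (π : T → ℕ → ℝ)
    (hπ0 : ∀ t j, j < k t → 0 ≤ π t j) (hπ1 : ∀ t j, j < k t → π t j ≤ 1)
    (hπmono : ∀ t j, j + 1 < k t → π t (j + 1) ≤ π t j)
    (ω : ℕ) :
    ∃ a : T → ℕ → Option C,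
      -- `a` is feasible
      (∀ ℓ : L, ∀ c : C,
        ∑ t, ∑ j ∈ Finset.range (k t),
          (if a t j = some c ∧ ℓ ∈ Leg t then n t else 0) ≤ ω) ∧
      -- `a` has maximum weight among all feasible pre-assignments
      (∀ a' : T → ℕ → Option C,
        (∀ ℓ : L, ∀ c : C,
          ∑ t, ∑ j ∈ Finset.range (k t),
            (if a' t j = some c ∧ ℓ ∈ Leg t then n t else 0) ≤ ω) →
        (∑ t, ∑ j ∈ Finset.range (k t), (if a' t j = none then 0 else π t j * p t))
          ≤ ∑ t, ∑ j ∈ Finset.range (k t), (if a t j = none then 0 else π t j * p t)) ∧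
      -- the `(j+1)`-st copy of a type is assigned only if the `j`-th copy is assigned
      (∀ t, ∀ j, j + 1 < k t → a t (j + 1) ≠ none → a t j ≠ none) :=
  exists_optimal_monotone_preassignment_general n Leg p hp k π hπmono ω
end
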